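/- (Two-dimensional positivity identity, Example (c)) In ℂ², let p_k = ∂²/∂z_k² for k = 1,2, and let p_k^* denote multiplication by z_k². Then for any polynomials u_1, u_2 in (z_1, z_2), Σ_{j,k=1}^{2} ∫_{ℂ²} ([p_k, p_j^*] u_j) \overline{u_k} e^{−|z|²} dλ = 2(‖u_1‖² + ‖u_2‖²) + 4(‖∂u_1/∂z_1‖² + ‖∂u_2/∂z_2‖²), where ‖f‖² = ∫_{ℂ²} |f|² e^{−|z|²} dλ. In particular the left-hand side is at least 2(‖u_1‖²+‖u_2‖²). -/

import Mathlib

open MeasureTheory MvPolynomial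

/-- Gaussian weight e^{-|z|²} on ℂ², as a complex number. -/
noncomputable def E2 (z : Fin 2 → ℂ) : ℂ := (Real.exp (-∑ i, ‖z i‖ ^ 2) : ℂ)

/-- Weighted L² square norm ∫ |v|² e^{-|z|²} dλ (as a complex number). -/
noncomputable def N2 (v : MvPolynomial (Fin 2) ℂ) : ℂ :=
  ∫ z : Fin 2 → ℂ, ((Complex.normSq (eval z v) : ℝ) : ℂ) * E2 z

/-!
For the Fock inner product `⟨f, g⟩ = ∫ f conj g e^{-|z|²} dλ`, polar coordinates give
`∫_ℂ z^a conj(z)^b e^{-|z|²} dλ = δ_{ab} π a!`. Hence monomials are orthogonal, and multiplication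
by `z_i` is adjoint to `∂/∂z_i`. The commutator `[∂_k², z_j²]` vanishes for `j ≠ k` and equals
`2 + 4 z_j ∂_j` for `j = k`, so by adjointness `⟨[p_j, p_j^*] u, u⟩ = 2‖u‖² + 4‖∂_j u‖²`.
-/

open Set
open scoped ComplexConjugate Nat Real

noncomputable def gaussianMoment (a b : ℕ) : ℂ :=
  ∫ z : ℂ, z ^ a * conj z ^ b * (Real.exp (-‖z‖ ^ 2) : ℂ)

lemma integrable_norm_pow_mul_exp_neg_sq_norm (n : ℕ) :
    Integrable (fun z : ℂ => ‖z‖ ^ n * Real.exp (-‖z‖ ^ 2)) := by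
  -- otherwise the integral would be `0`, not a positive value of `Γ`
  refine Integrable.of_integral_ne_zero ?_
  have h := Complex.integral_rpow_mul_exp_neg_rpow (p := 2) (q := n) one_le_two
    (by linarith [n.cast_nonneg (α := ℝ)])
  simp only [Real.rpow_natCast, Real.rpow_two] at h
  rw [h]
  have := Real.Gamma_pos_of_pos (s := (n + 2) / 2) (by positivity)
  positivity

lemma integrable_gaussianMoment_integrand (a b : ℕ) :
    Integrable (fun z : ℂ => z ^ a * conj z ^ b * (Real.exp (-‖z‖ ^ 2) : ℂ)) := by
  refine (integrable_norm_pow_mul_exp_neg_sq_norm (a + b)).mono' (by fun_prop) ?_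
  refine Filter.Eventually.of_forall fun z => le_of_eq ?_
  rw [norm_mul, norm_mul, norm_pow, norm_pow, RCLike.norm_conj, Complex.norm_real,
    Real.norm_of_nonneg (Real.exp_pos _).le, pow_add]

lemma integral_cexp_int_mul_I_mul {n : ℤ} (hn : n ≠ 0) :
    ∫ θ in -π..π, Complex.exp (n * Complex.I * θ) = 0 := by
  have hc : (n : ℂ) * Complex.I ≠ 0 := mul_ne_zero (by exact_mod_cast hn) Complex.I_ne_zero
  have hper : Complex.exp (n * Complex.I * π) = Complex.exp (n * Complex.I * (-π : ℝ)) := by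
    rw [← mul_one (Complex.exp (_ * ((-π : ℝ) : ℂ))), ← Complex.exp_int_mul_two_pi_mul_I n,
      ← Complex.exp_add]
    push_cast; ring_nf
  rw [integral_exp_mul_complex hc, hper, sub_self, zero_div]

lemma gaussianMoment_integrand_polarCoord_symm (a b : ℕ) {r : ℝ} (hr : 0 < r) (θ : ℝ) :
    r • ((Complex.polarCoord.symm (r, θ)) ^ a * conj (Complex.polarCoord.symm (r, θ)) ^ b *
        (Real.exp (-‖Complex.polarCoord.symm (r, θ)‖ ^ 2) : ℂ)) =
      ((r ^ (a + b + 1) * Real.exp (-r ^ 2) : ℝ) : ℂ) *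
        Complex.exp ((a - b : ℤ) * Complex.I * θ) := by
  have hz : Complex.polarCoord.symm (r, θ) = r * Complex.exp (θ * Complex.I) := by
    rw [Complex.polarCoord_symm_apply, Complex.exp_mul_I, ← Complex.ofReal_cos,
      ← Complex.ofReal_sin]
  rw [Complex.norm_polarCoord_symm, abs_of_pos hr, hz, map_mul, Complex.conj_ofReal,
    ← Complex.exp_conj, Complex.real_smul]
  simp only [map_mul, Complex.conj_ofReal, Complex.conj_I, mul_pow, ← Complex.exp_nat_mul]
  have hphase : Complex.exp (a * (θ * Complex.I)) * Complex.exp (b * (θ * -Complex.I)) =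
      Complex.exp ((a - b : ℂ) * Complex.I * θ) := by
    rw [← Complex.exp_add]; ring_nf
  push_cast
  rw [← hphase]
  ring

lemma integral_Ioi_pow_mul_exp_neg_sq (n : ℕ) :
    ∫ r in Ioi (0 : ℝ), r ^ n * Real.exp (-r ^ 2) = Real.Gamma ((n + 1) / 2) / 2 := by
  have h := integral_rpow_mul_exp_neg_rpow (p := 2) (q := n) two_pos
    (by linarith [n.cast_nonneg (α := ℝ)])
  simp only [Real.rpow_natCast, Real.rpow_two] at h
  rw [h]
  ring

lemma gaussianMoment_eq (a b : ℕ) :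
    gaussianMoment a b = if a = b then (π : ℂ) * a ! else 0 := by
  rw [gaussianMoment, ← Complex.integral_comp_polarCoord_symm, polarCoord_target,
    setIntegral_congr_fun (measurableSet_Ioi.prod measurableSet_Ioo)
      (fun p hp => gaussianMoment_integrand_polarCoord_symm a b hp.1 p.2), Measure.volume_eq_prod,
    setIntegral_prod_mul (fun r : ℝ => ((r ^ (a + b + 1) * Real.exp (-r ^ 2) : ℝ) : ℂ))
      (fun θ : ℝ => Complex.exp ((a - b : ℤ) * Complex.I * θ)), integral_complex_ofReal,
    integral_Ioi_pow_mul_exp_neg_sq,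
    ← integral_Ioc_eq_integral_Ioo, ← intervalIntegral.integral_of_le (by linarith [Real.pi_pos])]
  split_ifs with hab
  · subst hab
    have hΓ : Real.Gamma (((a + a + 1 : ℕ) + 1) / 2) = a ! := by
      rw [← Real.Gamma_nat_eq_factorial]; push_cast; ring_nf
    simp only [sub_self, Int.cast_zero, zero_mul, Complex.exp_zero,
      intervalIntegral.integral_const, hΓ]
    rw [Complex.real_smul]; push_cast; ring
  · rw [integral_cexp_int_mul_I_mul (sub_ne_zero.mpr (by exact_mod_cast hab)), mul_zero]

lemma gaussianMoment_succ_left (a b : ℕ) :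
    gaussianMoment (a + 1) b = b * gaussianMoment a (b - 1) := by
  rcases b with _ | b
  · simp [gaussianMoment_eq]
  · simp only [gaussianMoment_eq, Nat.add_sub_cancel, Nat.add_right_cancel_iff,
      Nat.factorial_succ]
    split_ifs with hab
    · subst hab; push_cast; ring
    · rw [mul_zero]

section Commutator

variable {R σ : Type*} [CommRing R]

lemma pderiv_pderiv_X_sq_mul_sub (i : σ) (p : MvPolynomial σ R) :
    pderiv i (pderiv i (X i ^ 2 * p)) - X i ^ 2 * pderiv i (pderiv i p) =
      2 * p + 4 * (X i * pderiv i p) := by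
  simp only [pow_two, Derivation.leibniz, pderiv_X_self, smul_eq_mul, map_add, mul_one]
  ring

lemma pderiv_pderiv_X_sq_mul_sub_of_ne {i j : σ} (h : j ≠ i) (p : MvPolynomial σ R) :
    pderiv i (pderiv i (X j ^ 2 * p)) - X j ^ 2 * pderiv i (pderiv i p) = 0 := by
  simp only [pow_two, Derivation.leibniz, pderiv_X_of_ne h, smul_eq_mul, mul_zero, add_zero]
  ring

end Commutator

section Fock

variable {ι : Type*} [Fintype ι]

noncomputable def gaussianWeight (z : ι → ℂ) : ℂ := (Real.exp (-∑ i, ‖z i‖ ^ 2) : ℂ)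

noncomputable def fockIntegrand (f g : MvPolynomial ι ℂ) (z : ι → ℂ) : ℂ :=
  eval z f * conj (eval z g) * gaussianWeight z

noncomputable def fockInner (f g : MvPolynomial ι ℂ) : ℂ := ∫ z, fockIntegrand f g z

lemma fockIntegrand_monomial (s t : ι →₀ ℕ) (c d : ℂ) (z : ι → ℂ) :
    fockIntegrand (monomial s c) (monomial t d) z =
      c * conj d * ∏ i, (z i ^ s i * conj (z i) ^ t i * (Real.exp (-‖z i‖ ^ 2) : ℂ)) := by
  simp only [fockIntegrand, gaussianWeight, eval_monomial, Finsupp.prod_pow, map_mul, map_prod,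
    map_pow, ← Finset.sum_neg_distrib, Real.exp_sum, Complex.ofReal_prod, Finset.prod_mul_distrib]
  ring

lemma fockIntegrand_add_left (f f' g : MvPolynomial ι ℂ) :
    fockIntegrand (f + f') g = fockIntegrand f g + fockIntegrand f' g := by
  ext z; simp only [fockIntegrand, eval_add, Pi.add_apply]; ring

lemma fockIntegrand_add_right (f g g' : MvPolynomial ι ℂ) :
    fockIntegrand f (g + g') = fockIntegrand f g + fockIntegrand f g' := by
  ext z; simp only [fockIntegrand, map_add, Pi.add_apply]; ring

lemma integrable_fockIntegrand (f g : MvPolynomial ι ℂ) : Integrable (fockIntegrand f g) := by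
  induction f using MvPolynomial.induction_on' generalizing g with
  | monomial s c =>
    induction g using MvPolynomial.induction_on' with
    | monomial t d =>
      simp_rw [funext (fockIntegrand_monomial s t c d)]
      exact (Integrable.fintype_prod fun i =>
        integrable_gaussianMoment_integrand (s i) (t i)).const_mul _
    | add g g' hg hg' => rw [fockIntegrand_add_right]; exact hg.add hg'
  | add f f' hf hf' => rw [fockIntegrand_add_left]; exact (hf g).add (hf' g)

lemma fockInner_monomial (s t : ι →₀ ℕ) (c d : ℂ) :
    fockInner (monomial s c) (monomial t d) = c * conj d * ∏ i, gaussianMoment (s i) (t i) := by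
  simp_rw [fockInner, fockIntegrand_monomial, integral_const_mul]
  rw [integral_fintype_prod_volume_eq_prod
    (fun i (w : ℂ) => w ^ s i * conj w ^ t i * (Real.exp (-‖w‖ ^ 2) : ℂ))]
  rfl

lemma fockInner_add_left (f f' g : MvPolynomial ι ℂ) :
    fockInner (f + f') g = fockInner f g + fockInner f' g := by
  rw [fockInner, fockIntegrand_add_left,
    integral_add' (integrable_fockIntegrand f g) (integrable_fockIntegrand f' g)]
  rfl

lemma fockInner_add_right (f g g' : MvPolynomial ι ℂ) :
    fockInner f (g + g') = fockInner f g + fockInner f g' := by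
  rw [fockInner, fockIntegrand_add_right,
    integral_add' (integrable_fockIntegrand f g) (integrable_fockIntegrand f g')]
  rfl

lemma fockInner_C_mul_left (c : ℂ) (f g : MvPolynomial ι ℂ) :
    fockInner (C c * f) g = c * fockInner f g := by
  simp_rw [fockInner, fockIntegrand, eval_mul, eval_C, mul_assoc, integral_const_mul]

lemma prod_gaussianMoment_single_add (i : ι) (s t : ι →₀ ℕ) :
    ∏ k, gaussianMoment ((Finsupp.single i 1 + s : ι →₀ ℕ) k) (t k) =
      t i * ∏ k, gaussianMoment (s k) ((t - Finsupp.single i 1 : ι →₀ ℕ) k) := by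
  classical
  rw [Fintype.prod_eq_mul_prod_compl i, Fintype.prod_eq_mul_prod_compl i, ← mul_assoc]
  congr 1
  · simp [add_comm 1, gaussianMoment_succ_left]
  · refine Finset.prod_congr rfl fun k hk => ?_
    have hki : i ≠ k := fun h => by simp [h] at hk
    simp [Finsupp.single_eq_of_ne' hki]

lemma fockInner_X_mul_left (i : ι) (f g : MvPolynomial ι ℂ) :
    fockInner (X i * f) g = fockInner f (pderiv i g) := by
  classical
  induction f using MvPolynomial.induction_on' generalizing g with
  | monomial s c =>
    induction g using MvPolynomial.induction_on' with
    | monomial t d =>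
      rw [X, monomial_mul, one_mul, pderiv_monomial, fockInner_monomial, fockInner_monomial,
        prod_gaussianMoment_single_add, map_mul, map_natCast]
      ring
    | add g g' hg hg' => rw [map_add, fockInner_add_right, fockInner_add_right, hg, hg']
  | add f f' hf hf' => rw [mul_add, fockInner_add_left, fockInner_add_left, hf, hf']

lemma re_fockInner_self_nonneg (f : MvPolynomial ι ℂ) : 0 ≤ (fockInner f f).re := by
  have h : fockInner f f =
      ∫ z, ((Complex.normSq (eval z f) * Real.exp (-∑ i, ‖z i‖ ^ 2) : ℝ) : ℂ) := by
    simp_rw [fockInner, fockIntegrand, Complex.mul_conj, gaussianWeight, Complex.ofReal_mul]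
  rw [h, integral_complex_ofReal, Complex.ofReal_re]
  exact integral_nonneg fun z => mul_nonneg (Complex.normSq_nonneg _) (Real.exp_pos _).le

lemma fockInner_zero_left (g : MvPolynomial ι ℂ) : fockInner 0 g = 0 := by
  simp [fockInner, fockIntegrand]

lemma fockInner_commutator_self (i : ι) (f g : MvPolynomial ι ℂ) :
    fockInner (pderiv i (pderiv i (X i ^ 2 * f)) - X i ^ 2 * pderiv i (pderiv i f)) g =
      2 * fockInner f g + 4 * fockInner (pderiv i f) (pderiv i g) := by
  rw [pderiv_pderiv_X_sq_mul_sub, ← map_ofNat C 2, ← map_ofNat C 4, fockInner_add_left,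
    fockInner_C_mul_left, fockInner_C_mul_left, fockInner_X_mul_left]

lemma sum_fockInner_commutator (u : ι → MvPolynomial ι ℂ) :
    ∑ j, ∑ k, fockInner (pderiv k (pderiv k (X j ^ 2 * u j)) - X j ^ 2 * pderiv k (pderiv k (u j)))
        (u k) =
      ∑ j, (2 * fockInner (u j) (u j) + 4 * fockInner (pderiv j (u j)) (pderiv j (u j))) := by
  refine Finset.sum_congr rfl fun j _ => ?_
  rw [Fintype.sum_eq_single j fun k hkj => by
    rw [pderiv_pderiv_X_sq_mul_sub_of_ne hkj.symm, fockInner_zero_left]]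
  exact fockInner_commutator_self j (u j) (u j)

end Fock

lemma fockInner_eq_integral_E2 (f g : MvPolynomial (Fin 2) ℂ) :
    fockInner f g = ∫ z, eval z f * conj (eval z g) * E2 z := rfl

lemma N2_eq_fockInner (v : MvPolynomial (Fin 2) ℂ) : N2 v = fockInner v v := by
  simp_rw [N2, fockInner, fockIntegrand, Complex.mul_conj]
  rfl

/-- Two-dimensional positivity identity (Example (c)): for p_k = ∂²/∂z_k²,
Σ_{j,k} ([p_k,p_j^*]u_j, u_k) = 2(‖u₁‖²+‖u₂‖²) + 4(‖∂u₁/∂z₁‖²+‖∂u₂/∂z₂‖²),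
and in particular the left-hand side is at least 2(‖u₁‖²+‖u₂‖²). -/
theorem stmt12 (u : Fin 2 → MvPolynomial (Fin 2) ℂ) :
    (∑ j : Fin 2, ∑ k : Fin 2,
        ∫ z : Fin 2 → ℂ,
          eval z (pderiv k (pderiv k (X j ^ 2 * u j)) -
              X j ^ 2 * pderiv k (pderiv k (u j))) *
            (starRingEnd ℂ) (eval z (u k)) * E2 z) =
      2 * (N2 (u 0) + N2 (u 1)) +
        4 * (N2 (pderiv 0 (u 0)) + N2 (pderiv 1 (u 1))) ∧
    (2 * (N2 (u 0) + N2 (u 1))).re ≤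
      (∑ j : Fin 2, ∑ k : Fin 2,
        ∫ z : Fin 2 → ℂ,
          eval z (pderiv k (pderiv k (X j ^ 2 * u j)) -
              X j ^ 2 * pderiv k (pderiv k (u j))) *
            (starRingEnd ℂ) (eval z (u k)) * E2 z).re := by
  simp only [← fockInner_eq_integral_E2]
  rw [sum_fockInner_commutator]
  simp only [Fin.sum_univ_two, N2_eq_fockInner]
  refine ⟨by ring, ?_⟩
  have h0 := re_fockInner_self_nonneg (pderiv 0 (u 0))
  have h1 := re_fockInner_self_nonneg (pderiv 1 (u 1))
  simp only [Complex.add_re, Complex.mul_re, Complex.re_ofNat, Complex.im_ofNat, zero_mul,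
    sub_zero]
  linarith
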